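/- Fix integers A, a and a positive integer C with 0 ≤ a ≤ 3 and gcd(A,C) = 1, and let τ ∈ ℍ. Set u_τ = (A/C)τ + a/2 and v_τ = τ/2. Then both x̃_{γ,τ} − u_τ ∈ ℤτ + ℤ for x = u and x̃_{γ,τ} − v_τ ∈ ℤτ + ℤ for x = v hold if and only if γ ∈ A_α. -/

import Mathlib

/-!
Write `γ = (P Q; R S)` and `j = Rτ + S`. A direct computation gives
`ũ − u = ((2A(P−1) + aCR)τ + (2AQ + aC(S−1))) / (2C)` and `ṽ − v = ((P−1)τ + Q) / 2`, and since
`τ` and `1` are linearly independent over `ℝ`, membership in `ℤτ + ℤ` becomes divisibility of the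
integer coefficients. Once `2 ∣ P − 1` and `2 ∣ Q`, the determinant gives `2 ∣ S − 1`, so the
second `u`-condition is just `C ∣ Q`, and everything hinges on `2C ∣ 2A(P−1) + aCR`. For even `a`
this is `C ∣ P − 1`; for odd `a` it is `C ∣ 2(P−1)` together with the parity coupling
`C ∣ P − 1 ↔ 2 ∣ R`, which for `4 ∣ C` produces the second piece of `A_α`.
-/

abbrev SL2Z := Matrix.SpecialLinearGroup (Fin 2) ℤ

/-- `Γ₀(N)`: lower-left entry divisible by `N`. -/
def myGamma0 (N : ℕ) : Set SL2Z := {g | (N:ℤ) ∣ g.1 1 0}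

/-- `Γ⁰(N)`: upper-right entry divisible by `N`. -/
def myGammaUp0 (N : ℕ) : Set SL2Z := {g | (N:ℤ) ∣ g.1 0 1}

/-- `Γ¹(N)`: upper-right entry divisible by `N`, diagonal entries `≡ 1 (mod N)`. -/
def myGammaUp1 (N : ℕ) : Set SL2Z :=
  {g | (N:ℤ) ∣ g.1 0 1 ∧ (N:ℤ) ∣ (g.1 0 0 - 1) ∧ (N:ℤ) ∣ (g.1 1 1 - 1)}

/-- The principal congruence subgroup `Γ(N)` as a set. -/
def myGammaFull (N : ℕ) : Set SL2Z :=
  {g | (N:ℤ) ∣ g.1 0 1 ∧ (N:ℤ) ∣ g.1 1 0 ∧ (N:ℤ) ∣ (g.1 0 0 - 1) ∧ (N:ℤ) ∣ (g.1 1 1 - 1)}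

/-- The group `A_α` from the paper, depending on `a` and `C`. -/
def Aalpha (a : ℤ) (C : ℕ) : Set SL2Z :=
  if a = 0 ∨ a = 2 then myGammaUp1 (Nat.lcm 2 C)
  else if ¬ (4 ∣ C) then myGammaUp1 (Nat.lcm 2 C) ∩ myGamma0 2
  else (myGammaUp1 C ∩ myGamma0 2) ∪
    ((myGammaUp1 (C/2) ∩ myGammaUp0 C) \ (myGamma0 2 ∪ myGammaUp1 C))

section Lattice

variable {τ : ℂ}

lemma intCast_mul_add_intCast_eq_zero_iff (hτ : τ.im ≠ 0) {x y : ℤ} :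
    (x : ℂ) * τ + y = 0 ↔ x = 0 ∧ y = 0 := by
  refine ⟨fun h => ?_, fun ⟨hx, hy⟩ => by simp [hx, hy]⟩
  have hx : x = 0 := by
    have him := congrArg Complex.im h
    simp only [Complex.add_im, Complex.mul_im, Complex.intCast_re, Complex.intCast_im, zero_mul,
      add_zero, Complex.zero_im, mul_eq_zero, Int.cast_eq_zero] at him
    exact him.resolve_right hτ
  subst hx
  simpa using h

lemma exists_div_eq_intCast_mul_add_intCast_iff_dvd (hτ : τ.im ≠ 0) {m : ℤ} (hm : m ≠ 0)
    (n₁ n₂ : ℤ) :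
    (∃ k l : ℤ, ((n₁ : ℂ) * τ + n₂) / m = k * τ + l) ↔ m ∣ n₁ ∧ m ∣ n₂ := by
  constructor
  · rintro ⟨k, l, h⟩
    rw [div_eq_iff (Int.cast_ne_zero.mpr hm)] at h
    have h0 : ((n₁ - m * k : ℤ) : ℂ) * τ + ((n₂ - m * l : ℤ) : ℂ) = 0 := by
      push_cast
      linear_combination h
    obtain ⟨h₁, h₂⟩ := (intCast_mul_add_intCast_eq_zero_iff hτ).mp h0
    exact ⟨⟨k, by linarith⟩, ⟨l, by linarith⟩⟩
  · rintro ⟨⟨k, rfl⟩, ⟨l, rfl⟩⟩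
    exact ⟨k, l, by push_cast; field_simp⟩

lemma intCast_mul_add_intCast_ne_zero_of_det (hτ : τ.im ≠ 0) {P Q R S : ℤ}
    (hdet : P * S - Q * R = 1) : (R : ℂ) * τ + S ≠ 0 := by
  intro h
  obtain ⟨rfl, rfl⟩ := (intCast_mul_add_intCast_eq_zero_iff hτ).mp h
  simp at hdet

variable {A a P Q R S : ℤ} {C : ℕ}

lemma u_tilde_sub_u_eq (hC : C ≠ 0) (hj : (R : ℂ) * τ + S ≠ 0) :
    ((A : ℂ) / C * ((P * τ + Q) / (R * τ + S)) + a / 2) * (R * τ + S) - (A / C * τ + a / 2) =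
      (((2 * A * (P - 1) + a * C * R : ℤ) : ℂ) * τ + ((2 * A * Q + a * C * (S - 1) : ℤ) : ℂ)) /
        ((2 * C : ℤ) : ℂ) := by
  rw [add_mul, mul_assoc, div_mul_cancel₀ _ hj]
  push_cast
  field_simp
  ring

lemma v_tilde_sub_v_eq (hj : (R : ℂ) * τ + S ≠ 0) :
    (P * τ + Q) / (R * τ + S) / 2 * (R * τ + S) - τ / 2 =
      (((P - 1 : ℤ) : ℂ) * τ + (Q : ℂ)) / ((2 : ℤ) : ℂ) := by
  rw [div_right_comm, div_mul_cancel₀ _ hj]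
  push_cast
  ring

end Lattice

section Divisibility

variable {A C D P Q R S : ℤ}

lemma dvd_sub_one_of_det_eq_one (hdet : P * S - Q * R = 1) {d : ℤ} (hP : d ∣ P - 1)
    (hQ : d ∣ Q) : d ∣ S - 1 := by
  rw [show S - 1 = Q * R - (P - 1) * S by linear_combination hdet]
  exact dvd_sub (hQ.mul_right R) (hP.mul_right S)

lemma two_mul_dvd_two_mul_add_two_mul_iff (hAC : IsCoprime A C) (x y : ℤ) :
    2 * C ∣ 2 * A * x + 2 * C * y ↔ C ∣ x := by
  rw [show 2 * A * x + 2 * C * y = 2 * (A * x + C * y) by ring,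
    mul_dvd_mul_iff_left two_ne_zero, dvd_add_left (dvd_mul_right C y)]
  exact ⟨hAC.symm.dvd_of_dvd_mul_left, (Dvd.dvd.mul_left · A)⟩

lemma two_mul_dvd_two_mul_add_odd_mul_iff (hAC : IsCoprime A C) (hC : C ≠ 0) {a : ℤ}
    (ha : Odd a) (x y : ℤ) :
    2 * C ∣ 2 * A * x + a * C * y ↔ C ∣ 2 * x ∧ (C ∣ x ↔ 2 ∣ y) := by
  -- with `2x = Cm`, both sides say that `Am + ay` is even
  have key : ∀ m, 2 * x = C * m → (2 * C ∣ 2 * A * x + a * C * y ↔ (C ∣ x ↔ 2 ∣ y)) := by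
    intro m hm
    have hAm : Even A → Even m := fun hA => by
      have hC : ¬ Even C := fun hC => by
        have := hAC.isUnit_of_dvd' (even_iff_two_dvd.mp hA) (even_iff_two_dvd.mp hC)
        norm_num [Int.isUnit_iff] at this
      exact (Int.even_mul.mp (hm ▸ even_two_mul x)).resolve_left hC
    have hCx : C ∣ x ↔ 2 ∣ m := by
      rw [← mul_dvd_mul_iff_left (two_ne_zero (α := ℤ)), hm, mul_comm 2 C,
        mul_dvd_mul_iff_left hC]
    rw [show 2 * A * x + a * C * y = C * (A * m + a * y) by linear_combination A * hm,
      mul_comm 2 C, mul_dvd_mul_iff_left hC, hCx]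
    simp only [← even_iff_two_dvd, Int.even_add, Int.even_mul, or_iff_right_of_imp hAm,
      or_iff_right (Int.not_even_iff_odd.mpr ha)]
  constructor
  · intro h
    have hCA : C ∣ A * (2 * x) := by
      rw [show A * (2 * x) = 2 * A * x by ring]
      exact (dvd_add_left ((dvd_mul_left C a).mul_right y)).mp ((dvd_mul_left C 2).trans h)
    obtain ⟨m, hm⟩ := hAC.symm.dvd_of_dvd_mul_left hCA
    exact ⟨⟨m, hm⟩, (key m hm).mp h⟩
  · rintro ⟨⟨m, hm⟩, h⟩
    exact (key m hm).mpr h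

lemma dvd_of_dvd_two_mul_of_two_dvd (hC : ¬ 4 ∣ C) {x : ℤ} (hx : 2 ∣ x) (h : C ∣ 2 * x) :
    C ∣ x := by
  by_cases hC2 : 2 ∣ C
  · obtain ⟨C', rfl⟩ := hC2
    have hC' : IsCoprime 2 C' :=
      Int.prime_two.coprime_iff_not_dvd.mpr fun ⟨u, hu⟩ => hC ⟨u, by rw [hu]; ring⟩
    exact hC'.mul_dvd hx ((mul_dvd_mul_iff_left two_ne_zero).mp h)
  · exact (Int.prime_two.coprime_iff_not_dvd.mpr hC2).symm.dvd_of_dvd_mul_left h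

lemma natCast_lcm_two_dvd_iff {C : ℕ} {x : ℤ} :
    ((Nat.lcm 2 C : ℕ) : ℤ) ∣ x ↔ 2 ∣ x ∧ (C : ℤ) ∣ x :=
  Int.coe_lcm_dvd_iff (a := 2) (b := C)

lemma translation_conditions_iff (hAC : IsCoprime A C) (hdet : P * S - Q * R = 1) (a : ℤ) :
    ((2 * C ∣ 2 * A * (P - 1) + a * C * R ∧ 2 * C ∣ 2 * A * Q + a * C * (S - 1)) ∧
        (2 ∣ P - 1 ∧ 2 ∣ Q)) ↔
      2 ∣ P - 1 ∧ 2 ∣ Q ∧ C ∣ Q ∧ 2 * C ∣ 2 * A * (P - 1) + a * C * R := by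
  have hQ : 2 ∣ P - 1 → 2 ∣ Q → (2 * C ∣ 2 * A * Q + a * C * (S - 1) ↔ C ∣ Q) := fun h₁ h₂ => by
    obtain ⟨t, ht⟩ := dvd_sub_one_of_det_eq_one hdet h₁ h₂
    rw [ht, show 2 * A * Q + a * C * (2 * t) = 2 * A * Q + 2 * C * (a * t) by ring]
    exact two_mul_dvd_two_mul_add_two_mul_iff hAC Q (a * t)
  constructor
  · rintro ⟨⟨hu₁, hu₂⟩, h₁, h₂⟩
    exact ⟨h₁, h₂, (hQ h₁ h₂).mp hu₂, hu₁⟩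
  · rintro ⟨h₁, h₂, hCQ, hu₁⟩
    exact ⟨⟨hu₁, (hQ h₁ h₂).mpr hCQ⟩, h₁, h₂⟩

lemma translation_conditions_iff_of_two_dvd {C : ℕ} (hAC : IsCoprime A C)
    (hdet : P * S - Q * R = 1) (a' : ℤ) :
    (2 ∣ P - 1 ∧ 2 ∣ Q ∧ (C : ℤ) ∣ Q ∧ 2 * (C : ℤ) ∣ 2 * A * (P - 1) + 2 * a' * C * R) ↔
      ((Nat.lcm 2 C : ℤ) ∣ Q ∧ (Nat.lcm 2 C : ℤ) ∣ P - 1 ∧ (Nat.lcm 2 C : ℤ) ∣ S - 1) := by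
  rw [show 2 * A * (P - 1) + 2 * a' * C * R = 2 * A * (P - 1) + 2 * C * (a' * R) by ring,
    two_mul_dvd_two_mul_add_two_mul_iff hAC]
  simp only [natCast_lcm_two_dvd_iff]
  constructor
  · rintro ⟨h₁, h₂, hCQ, hCP⟩
    exact ⟨⟨h₂, hCQ⟩, ⟨h₁, hCP⟩, dvd_sub_one_of_det_eq_one hdet h₁ h₂,
      dvd_sub_one_of_det_eq_one hdet hCP hCQ⟩
  · rintro ⟨⟨h₂, hCQ⟩, ⟨h₁, hCP⟩, -⟩
    exact ⟨h₁, h₂, hCQ, hCP⟩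

lemma translation_conditions_iff_of_not_four_dvd {C : ℕ} (hC : ¬ 4 ∣ C)
    (hdet : P * S - Q * R = 1) :
    (2 ∣ P - 1 ∧ 2 ∣ Q ∧ (C : ℤ) ∣ Q ∧ (C : ℤ) ∣ 2 * (P - 1) ∧ ((C : ℤ) ∣ P - 1 ↔ 2 ∣ R)) ↔
      ((Nat.lcm 2 C : ℤ) ∣ Q ∧ (Nat.lcm 2 C : ℤ) ∣ P - 1 ∧ (Nat.lcm 2 C : ℤ) ∣ S - 1) ∧
        2 ∣ R := by
  simp only [natCast_lcm_two_dvd_iff]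
  constructor
  · rintro ⟨h₁, h₂, hCQ, hCP₂, hR⟩
    have hCP := dvd_of_dvd_two_mul_of_two_dvd (by exact_mod_cast hC) h₁ hCP₂
    exact ⟨⟨⟨h₂, hCQ⟩, ⟨h₁, hCP⟩, dvd_sub_one_of_det_eq_one hdet h₁ h₂,
      dvd_sub_one_of_det_eq_one hdet hCP hCQ⟩, hR.mp hCP⟩
  · rintro ⟨⟨⟨h₂, hCQ⟩, ⟨h₁, hCP⟩, -⟩, hR⟩
    exact ⟨h₁, h₂, hCQ, hCP.mul_left 2, iff_of_true hCP hR⟩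

lemma translation_conditions_iff_of_eq_two_mul (hCD : C = 2 * D) (hD : 2 ∣ D)
    (hdet : P * S - Q * R = 1) :
    (2 ∣ P - 1 ∧ 2 ∣ Q ∧ C ∣ Q ∧ C ∣ 2 * (P - 1) ∧ (C ∣ P - 1 ↔ 2 ∣ R)) ↔
      ((C ∣ Q ∧ C ∣ P - 1 ∧ C ∣ S - 1) ∧ 2 ∣ R) ∨
        ((D ∣ Q ∧ D ∣ P - 1 ∧ D ∣ S - 1) ∧ C ∣ Q) ∧
          ¬(2 ∣ R ∨ C ∣ Q ∧ C ∣ P - 1 ∧ C ∣ S - 1) := by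
  have hDC : D ∣ C := ⟨2, by rw [hCD, mul_comm]⟩
  rw [show C ∣ 2 * (P - 1) ↔ D ∣ P - 1 by rw [hCD, mul_dvd_mul_iff_left two_ne_zero]]
  constructor
  · rintro ⟨-, -, hCQ, hDP, hR⟩
    by_cases h2R : 2 ∣ R
    · have hCP := hR.mpr h2R
      exact Or.inl ⟨⟨hCQ, hCP, dvd_sub_one_of_det_eq_one hdet hCP hCQ⟩, h2R⟩
    · refine Or.inr ⟨⟨⟨hDC.trans hCQ, hDP, dvd_sub_one_of_det_eq_one hdet hDP (hDC.trans hCQ)⟩,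
        hCQ⟩, ?_⟩
      rintro (h | ⟨-, hCP, -⟩)
      exacts [h2R h, h2R (hR.mp hCP)]
  · rintro (⟨⟨hCQ, hCP, -⟩, h2R⟩ | ⟨⟨⟨-, hDP, -⟩, hCQ⟩, hn⟩)
    · exact ⟨(hD.trans hDC).trans hCP, (hD.trans hDC).trans hCQ, hCQ, hDC.trans hCP,
        iff_of_true hCP h2R⟩
    · refine ⟨hD.trans hDP, (hD.trans hDC).trans hCQ, hCQ, hDP, iff_of_false ?_ ?_⟩
      · exact fun hCP => hn (Or.inr ⟨hCQ, hCP, dvd_sub_one_of_det_eq_one hdet hCP hCQ⟩)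
      · exact fun h2R => hn (Or.inl h2R)

end Divisibility

lemma translation_conditions_iff_mem_Aalpha {A a : ℤ} {C : ℕ} (hC : 0 < C) (ha : 0 ≤ a)
    (ha' : a ≤ 3) (hAC : IsCoprime A C) (γ : SL2Z) :
    ((2 * (C : ℤ) ∣ 2 * A * (γ.1 0 0 - 1) + a * C * γ.1 1 0 ∧
        2 * (C : ℤ) ∣ 2 * A * γ.1 0 1 + a * C * (γ.1 1 1 - 1)) ∧
      (2 ∣ γ.1 0 0 - 1 ∧ 2 ∣ γ.1 0 1)) ↔ γ ∈ Aalpha a C := by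
  induction γ using Matrix.SpecialLinearGroup.fin_two_induction with | h P Q R S hdet => ?_
  refine (translation_conditions_iff hAC hdet a).trans ?_
  unfold Aalpha
  split_ifs with hae h4
  · obtain ⟨a', rfl⟩ : 2 ∣ a := by rcases hae with rfl | rfl <;> norm_num
    exact translation_conditions_iff_of_two_dvd hAC hdet a'
  all_goals
    have hodd : Odd a := by rw [Int.odd_iff]; omega
    rw [two_mul_dvd_two_mul_add_odd_mul_iff hAC (by exact_mod_cast hC.ne') hodd]
  · obtain ⟨k, hk⟩ := h4
    rw [show C / 2 = 2 * k by omega]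
    exact translation_conditions_iff_of_eq_two_mul (by push_cast [hk]; ring)
      ⟨k, by push_cast; ring⟩ hdet
  · exact translation_conditions_iff_of_not_four_dvd h4 hdet

theorem stmt2 (A a : ℤ) (C : ℕ) (hC : 0 < C) (ha : 0 ≤ a) (ha' : a ≤ 3)
    (hgcd : Int.gcd A (C:ℤ) = 1) (τ : ℂ) (hτ : 0 < τ.im) (γ : SL2Z) :
    ((∃ k l : ℤ,
        ((A:ℂ)/(C:ℂ) * (((γ.1 0 0 : ℂ) * τ + (γ.1 0 1 : ℂ)) /
            ((γ.1 1 0 : ℂ) * τ + (γ.1 1 1 : ℂ))) + (a:ℂ)/2)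
          * ((γ.1 1 0 : ℂ) * τ + (γ.1 1 1 : ℂ))
        - ((A:ℂ)/(C:ℂ) * τ + (a:ℂ)/2) = (k:ℂ) * τ + (l:ℂ)) ∧
     (∃ r s : ℤ,
        ((((γ.1 0 0 : ℂ) * τ + (γ.1 0 1 : ℂ)) /
            ((γ.1 1 0 : ℂ) * τ + (γ.1 1 1 : ℂ))) / 2)
          * ((γ.1 1 0 : ℂ) * τ + (γ.1 1 1 : ℂ))
        - τ/2 = (r:ℂ) * τ + (s:ℂ)))
    ↔ γ ∈ Aalpha a C := by
  have hdet : γ.1 0 0 * γ.1 1 1 - γ.1 0 1 * γ.1 1 0 = 1 := by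
    rw [← Matrix.det_fin_two]
    exact γ.2
  have hj := intCast_mul_add_intCast_ne_zero_of_det hτ.ne' hdet
  rw [u_tilde_sub_u_eq hC.ne' hj, v_tilde_sub_v_eq hj,
    exists_div_eq_intCast_mul_add_intCast_iff_dvd hτ.ne' (by positivity),
    exists_div_eq_intCast_mul_add_intCast_iff_dvd hτ.ne' two_ne_zero]
  exact translation_conditions_iff_mem_Aalpha hC ha ha' (Int.isCoprime_iff_gcd_eq_one.mpr hgcd) γ
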